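/- arXiv:2404.01605 — 12 statements merged into one kernel-verified Lean document; each statement's English description precedes it below -/
import Mathlib

section
/- Let a, b ∈ ℚ with a ≠ 0 and f_n(x) = (1/a)(T_n(ax+b) − b). Then f_n(x) has integer coefficients for all n ∈ ℕ if and only if 2a ∈ ℤ and (b−1)/a ∈ ℤ. -/
open Polynomial

theorem chebyshev_chain_int_coeff_iff (a b : ℚ) (ha : a ≠ 0)
    (f : ℕ → ℚ[X])
    (hf : ∀ k : ℕ, f k =
      C a⁻¹ * ((Polynomial.Chebyshev.T ℚ (k : ℤ)).comp (C a * X + C b) - C b)) :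
    (∀ n : ℕ, 1 ≤ n → ∀ i : ℕ, ∃ z : ℤ, (f n).coeff i = (z : ℚ)) ↔
      ((∃ z : ℤ, 2 * a = (z : ℚ)) ∧ (∃ z : ℤ, (b - 1) / a = (z : ℚ))) := by
  have hT3 : Polynomial.Chebyshev.T ℚ 3 = 4 * X ^ 3 - 3 * X := by
    have := Polynomial.Chebyshev.T_add_two ℚ 1
    rw [show (1:ℤ) + 2 = 3 by ring, show (1:ℤ) + 1 = 2 by ring] at this
    rw [this, Polynomial.Chebyshev.T_two, Polynomial.Chebyshev.T_one]
    ring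
  have hu2 : f 2 = C (2*a) * X^2 + C (4*b) * X + C ((2*b^2 - b - 1)/a) := by
    rw [hf 2, show ((2:ℕ):ℤ) = 2 by norm_num, Polynomial.Chebyshev.T_two]
    apply Polynomial.funext
    intro x
    simp [eval_comp]
    field_simp
    ring
  have hu3 : f 3 = C (4*a^2) * X^3 + C (12*a*b) * X^2 + C (12*b^2 - 3) * X
      + C ((4*b^3 - 4*b)/a) := by
    rw [hf 3, show ((3:ℕ):ℤ) = 3 by norm_num, hT3]
    apply Polynomial.funext
    intro x
    simp [eval_comp]
    field_simp
    ring
  constructor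
  · intro h
    have h2 := h 2 (by norm_num)
    have h3 := h 3 (by norm_num)
    obtain ⟨m, hm⟩ := h2 2
    obtain ⟨z1, hz1⟩ := h2 1
    obtain ⟨z3, hz3⟩ := h2 0
    obtain ⟨z2, hz2⟩ := h3 1
    obtain ⟨z4, hz4⟩ := h3 0
    rw [hu2] at hm hz1 hz3
    rw [hu3] at hz2 hz4
    simp only [coeff_add, coeff_C_mul, coeff_X_pow, coeff_X, coeff_C] at hm hz1 hz3 hz2 hz4
    norm_num at hm hz1 hz3 hz2 hz4
    -- hm : 2*a = m, hz1 : 4*b = z1, hz3 : (2b²−b−1)/a = z3,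
    -- hz2 : 12b²−3 = z2, hz4 : (4b³−4b)/a = z4
    refine ⟨⟨m, hm⟩, ?_⟩
    have hw : ((z1^2 - z2 - 3 : ℤ) : ℚ) = 4*b^2 := by
      push_cast
      rw [← hz1, ← hz2]
      ring
    have hsq : z1^2 = 4*(z1^2 - z2 - 3) := by
      have : ((z1^2 : ℤ) : ℚ) = ((4*(z1^2 - z2 - 3) : ℤ) : ℚ) := by
        push_cast [hw]
        rw [← hz1]
        ring
      exact_mod_cast this
    have heven : Even z1 := by
      have h2d : (2:ℤ) ∣ z1 ^ 2 := ⟨2*(z1^2 - z2 - 3), by linarith [hsq]⟩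
      have hdvd : (2:ℤ) ∣ z1 := Int.prime_two.dvd_of_dvd_pow h2d
      obtain ⟨t, ht⟩ := hdvd
      exact ⟨t, by omega⟩
    obtain ⟨k, hk⟩ := heven
    have hkq : (k : ℚ) = 2*b := by
      have : (z1 : ℚ) = 2 * k := by exact_mod_cast (by linarith [hk] : z1 = 2*k)
      rw [← hz1] at this
      linarith [this]
    have hz3' : 2*b^2 - b - 1 = (z3:ℚ)*a := by
      field_simp at hz3
      linarith [hz3]
    have hz4' : 4*b^3 - 4*b = (z4:ℚ)*a := by
      field_simp at hz4
      linarith [hz4]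
    refine ⟨(k+1)*z3 - z4, ?_⟩
    rw [div_eq_iff ha]
    push_cast
    rw [hkq]
    linear_combination (2*b+1)*hz3' - hz4'
  · rintro ⟨⟨m, hm⟩, ⟨c, hc⟩⟩
    have hc' : b - 1 = (c:ℚ) * a := by
      field_simp at hc
      linarith [hc]
    have hCmem : ∀ q : ℚ, (∃ z : ℤ, q = (z:ℚ)) → (C q : ℚ[X]) ∈ lifts (Int.castRingHom ℚ) := by
      rintro q ⟨z, rfl⟩
      exact C_mem_lifts (Int.castRingHom ℚ) z
    have hsubmem : ∀ p q : ℚ[X], p ∈ lifts (Int.castRingHom ℚ) → q ∈ lifts (Int.castRingHom ℚ) →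
        p - q ∈ lifts (Int.castRingHom ℚ) := by
      intro p q hp hq
      have : p - q = p + C (-1 : ℚ) * q := by
        rw [map_neg, map_one]
        ring
      rw [this]
      exact add_mem hp (mul_mem (hCmem _ ⟨-1, by norm_num⟩) hq)
    have key : ∀ k : ℕ, f (k+2) = (C (2*a) * X + C (2*b)) * f (k+1) - f k
        + C (2*b) * X + C (2*b*((b-1)/a)) := by
      intro k
      have hT : Polynomial.Chebyshev.T ℚ ((k+2 : ℕ) : ℤ)
          = 2 * X * Polynomial.Chebyshev.T ℚ ((k+1 : ℕ) : ℤ)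
            - Polynomial.Chebyshev.T ℚ (k : ℤ) := by
        push_cast
        exact Polynomial.Chebyshev.T_add_two ℚ k
      rw [hf (k+2), hf (k+1), hf k, hT]
      apply Polynomial.funext
      intro x
      simp [eval_comp]
      field_simp
      ring
    have main : ∀ n : ℕ, f n ∈ lifts (Int.castRingHom ℚ) := by
      intro n
      induction n using Nat.strong_induction_on with
      | _ n ih =>
        match n with
        | 0 =>
          have : f 0 = C (-(c:ℚ)) := by
            rw [hf 0]
            apply Polynomial.funext
            intro x
            simp [eval_comp, Polynomial.Chebyshev.T_zero]
            field_simp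
            linarith [hc']
          rw [this]
          exact hCmem _ ⟨-c, by push_cast; ring⟩
        | 1 =>
          have : f 1 = X := by
            rw [hf 1]
            apply Polynomial.funext
            intro x
            simp [eval_comp, Polynomial.Chebyshev.T_one]
            field_simp
          rw [this]
          exact X_mem_lifts _
        | (k+2) =>
          rw [key k]
          have h1 := ih (k+1) (by omega)
          have h0 := ih k (by omega)
          have e2b : (2*b : ℚ) = ((m*c+2 : ℤ):ℚ) := by
            push_cast
            linear_combination 2*hc' + (c:ℚ)*hm
          have e2bc : (2*b*((b-1)/a) : ℚ) = (((m*c+2)*c : ℤ):ℚ) := by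
            rw [hc, e2b]
            push_cast
            ring
          refine add_mem (add_mem (hsubmem _ _ ?_ h0) ?_) (hCmem _ ⟨_, e2bc⟩)
          · exact mul_mem (add_mem (mul_mem (hCmem _ ⟨m, hm⟩) (X_mem_lifts _))
              (hCmem _ ⟨_, e2b⟩)) h1
          · exact mul_mem (hCmem _ ⟨_, e2b⟩) (X_mem_lifts _)
    intro n _ i
    have := (lifts_iff_coeff_lifts (f n)).1 (main n) i
    obtain ⟨z, hz⟩ := this
    exact ⟨z, hz.symm⟩
end

section
/- Let a, b ∈ ℚ with a ≠ 0, let f_n(x) = (1/a)(T_n(ax+b) − b), and let m, n be positive integers with m < n and n = km for an integer k ≥ 2. Then the remainder of the Euclidean division of f_n by f_m in ℚ[x] is the constant (1/a)(b·c_k − b − c_{k−1}), where c_i = U_{i−1}(b) and U_j is the Chebyshev polynomial of the second kind. -/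
open Polynomial

lemma cheb_T_degree : ∀ n : ℕ, (Polynomial.Chebyshev.T ℚ (n : ℤ)).degree = n
  | 0 => by simp [Polynomial.Chebyshev.T_zero]
  | 1 => by simp [Polynomial.Chebyshev.T_one]
  | (n + 2) => by
    have h1 := cheb_T_degree (n + 1)
    have h0 := cheb_T_degree n
    have : ((n + 2 : ℕ) : ℤ) = (n : ℤ) + 2 := by push_cast; ring
    rw [this, Polynomial.Chebyshev.T_add_two]
    push_cast at h1
    have hd : (2 * X * Polynomial.Chebyshev.T ℚ ((n : ℤ) + 1)).degree = ((n + 2 : ℕ) : WithBot ℕ) := by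
      rw [degree_mul, degree_mul, h1]
      rw [show ((2 : ℚ[X])) = C 2 from (map_ofNat C 2).symm, degree_C (by norm_num), degree_X]
      push_cast
      rw [show ((0 : WithBot ℕ)) + 1 = 1 from by rfl]
      ring
    rw [degree_sub_eq_left_of_degree_lt, hd]
    rw [hd, h0]
    exact_mod_cast WithBot.coe_lt_coe.mpr (by omega)

lemma mod_eq_of_dvd_sub {p q r : ℚ[X]} (hdvd : q ∣ p - r) (hr : r.degree < q.degree) :
    p % q = r := by
  have hq : q ≠ 0 := by rintro rfl; simp at hr
  have h1 : p % q = p - q * (p / q) := EuclideanDomain.mod_eq_sub_mul_div p q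
  have h2 : q ∣ p % q - r := by
    rw [h1, show p - q * (p / q) - r = (p - r) - q * (p / q) from by ring]
    exact dvd_sub hdvd (dvd_mul_right q _)
  have hmodlt : (p % q).degree < q.degree := by
    rw [Polynomial.mod_def]
    have hM : (q * C q.leadingCoeff⁻¹).Monic := monic_mul_leadingCoeff_inv hq
    calc (p %ₘ (q * C q.leadingCoeff⁻¹)).degree < (q * C q.leadingCoeff⁻¹).degree :=
          degree_modByMonic_lt p hM
      _ = q.degree := degree_mul_leadingCoeff_inv q hq
  have h3 : (p % q - r).degree < q.degree :=
    lt_of_le_of_lt (degree_sub_le _ _) (max_lt hmodlt hr)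
  have h4 : p % q - r = 0 := Polynomial.eq_zero_of_dvd_of_degree_lt h2 h3
  exact sub_eq_zero.mp h4

theorem chebyshev_chain_mod_of_dvd (a b : ℚ) (ha : a ≠ 0)
    (f : ℕ → ℚ[X])
    (hf : ∀ j : ℕ, f j =
      C a⁻¹ * ((Polynomial.Chebyshev.T ℚ (j : ℤ)).comp (C a * X + C b) - C b))
    (c : ℕ → ℚ)
    (hc : ∀ i : ℕ, c i = (Polynomial.Chebyshev.U ℚ ((i : ℤ) - 1)).eval b)
    (m n k : ℕ) (hm : 0 < m) (hk : 2 ≤ k) (hn : n = k * m) :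
    f n % f m = C ((b * c k - b - c (k - 1)) / a) := by
  set L : ℚ[X] := C a * X + C b with hL
  set Tm := Polynomial.Chebyshev.T ℚ (m : ℤ) with hTmdef
  -- the linear relation
  have hTm : C a * f m + C b = Tm.comp L := by
    rw [hf m, ← mul_assoc, ← C_mul, mul_inv_cancel₀ ha, C_1, one_mul]
    ring
  -- composition identity
  have hcomp : f n = (f k).comp (f m) := by
    rw [hf n, hf k, hn]
    simp only [sub_comp, mul_comp, C_comp]
    rw [Polynomial.comp_assoc]
    have hLc : L.comp (f m) = C a * f m + C b := by
      simp [hL, add_comp, mul_comp, C_comp, X_comp]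
    rw [hLc, hTm, ← Polynomial.comp_assoc, ← Polynomial.Chebyshev.T_mul]
    norm_cast
  -- degree of f m
  have hTmdeg : Tm.degree = (m : WithBot ℕ) := cheb_T_degree m
  have hTmnat : Tm.natDegree = m := natDegree_eq_of_degree_eq_some hTmdeg
  have hSnat : (Tm.comp L).natDegree = m := by
    rw [natDegree_comp, hTmnat, natDegree_linear ha, mul_one]
  have hSne : Tm.comp L ≠ 0 := by
    intro h0
    rw [h0, natDegree_zero] at hSnat
    omega
  have hSdeg : (Tm.comp L).degree = (m : WithBot ℕ) := by
    rw [degree_eq_natDegree hSne, hSnat]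
  have hzm : (0 : WithBot ℕ) < (m : WithBot ℕ) := by exact_mod_cast hm
  have hgdeg : (f m).degree = (m : WithBot ℕ) := by
    rw [hf m, degree_mul, degree_C (inv_ne_zero ha),
      degree_sub_eq_left_of_degree_lt (lt_of_le_of_lt degree_C_le (hSdeg ▸ hzm)), hSdeg,
      zero_add]
  -- value of the constant
  have hTk : (Polynomial.Chebyshev.T ℚ (k : ℤ)).eval b = b * c k - c (k - 1) := by
    have h1 := Polynomial.Chebyshev.T_eq_U_sub_X_mul_U ℚ (k : ℤ)
    have h2 := Polynomial.Chebyshev.U_sub_two ℚ (k : ℤ)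
    have h3 : Polynomial.Chebyshev.T ℚ (k : ℤ) =
        X * Polynomial.Chebyshev.U ℚ ((k : ℤ) - 1) - Polynomial.Chebyshev.U ℚ ((k : ℤ) - 2) := by
      linear_combination h1 + h2
    have hcast : ((k - 1 : ℕ) : ℤ) - 1 = (k : ℤ) - 2 := by
      have : ((k - 1 : ℕ) : ℤ) = (k : ℤ) - 1 := by
        rw [Nat.cast_sub (by omega)]; norm_num
      omega
    rw [hc k, hc (k - 1), hcast, h3]
    simp
  have hval : (f k).coeff 0 = (b * c k - b - c (k - 1)) / a := by
    rw [coeff_zero_eq_eval_zero, hf k]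
    simp only [hL, eval_mul, eval_sub, eval_comp, eval_add, eval_C, eval_X, mul_zero, zero_add]
    rw [hTk]
    field_simp
    ring
  -- divisibility
  have hdvd : f m ∣ f n - C ((b * c k - b - c (k - 1)) / a) := by
    obtain ⟨q, hq⟩ : X ∣ f k - C ((f k).coeff 0) := X_dvd_iff.mpr (by simp)
    refine ⟨q.comp (f m), ?_⟩
    rw [hcomp, ← hval]
    calc (f k).comp (f m) - C ((f k).coeff 0)
        = (f k - C ((f k).coeff 0)).comp (f m) := by simp [sub_comp]
      _ = (X * q).comp (f m) := by rw [hq]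
      _ = f m * q.comp (f m) := by simp [mul_comp]
  exact mod_eq_of_dvd_sub hdvd (lt_of_le_of_lt degree_C_le (hgdeg ▸ hzm))
end

section
/- Let a, b ∈ ℚ with a ≠ 0, f_n(x) = (1/a)(T_n(ax+b) − b), and let m, n be positive integers with m < n and m ∤ n; set k = ⌊n/m⌋. Then the remainder of the Euclidean division of f_n by f_m in ℚ[x] equals c_{k+1}·f_{n−km}(x) − c_k·f_{(k+1)m−n}(x) + (b/a)(c_{k+1} − c_k − 1), where c_i = U_{i−1}(b). -/
/-!
Both sides of `T (j * m + r) = U_j(T_m) T_r - U_{j-1}(T_m) T_{r-m}` satisfy the recurrence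
`Y_{j+1} = 2 T_m Y_j - Y_{j-1}` in `j`. Modulo `T_m - b` each `U_i(T_m)` reduces to the constant
`U_i(b)`, so after conjugating by `x ↦ a x + b`, `f_m` divides `f_{km+r}` minus the claimed
polynomial. For `r = n - km` we have `0 < r < m` and `(k+1)m - n = m - r`, so that polynomial has
degree below `m = deg f_m` and is the remainder.
-/

open Polynomial

namespace Polynomial.Chebyshev

variable (R : Type*) [CommRing R]

theorem T_mul_add (m r j : ℤ) :
    T R (j * m + r) =
      (U R j).comp (T R m) * T R r - (U R (j - 1)).comp (T R m) * T R (r - m) := by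
  induction j using Polynomial.Chebyshev.induct with
  | zero => simp
  | one =>
    have h := T_mul_T R m r
    rw [← T_neg R (m - r), neg_sub] at h
    simp only [one_mul, U_one, sub_self, U_zero, mul_comp, ofNat_comp, X_comp, one_comp]
    linear_combination -h
  | add_two j ih1 ih2 =>
    have h₁ := T_mul_T R m ((j + 1) * m + r)
    rw [← T_neg R (m - _), show -(m - ((j + 1) * m + r)) = j * m + r by ring,
      show m + ((j + 1) * m + r) = (j + 2) * m + r by ring] at h₁
    have h₂ := congr_arg (comp · (T R m)) <| U_add_two R j
    have h₃ := congr_arg (comp · (T R m)) <| U_add_one R j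
    simp only [sub_comp, mul_comp, ofNat_comp, X_comp, Nat.cast_ofNat] at h₂ h₃
    rw [add_sub_cancel_right] at ih1
    rw [show (j : ℤ) + 2 - 1 = j + 1 by ring]
    linear_combination -h₁ + 2 * T R m * ih1 - ih2 - T R r * h₂ + T R (r - m) * h₃
  | neg_add_one j ih1 ih2 =>
    have h₁ := T_mul_T R m (-j * m + r)
    rw [← T_neg R (m - _), show -(m - (-j * m + r)) = (-j - 1) * m + r by ring,
      show m + (-j * m + r) = (-j + 1) * m + r by ring] at h₁
    have h₂ := congr_arg (comp · (T R m)) <| U_sub_two R (-j)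
    have h₃ := congr_arg (comp · (T R m)) <| U_sub_one R (-j)
    simp only [sub_comp, mul_comp, ofNat_comp, X_comp, Nat.cast_ofNat] at h₂ h₃
    rw [sub_sub, show (1 : ℤ) + 1 = 2 by norm_num]
    rw [add_sub_cancel_right] at ih2
    linear_combination -h₁ + 2 * T R m * ih1 - ih2 - T R r * h₃ + T R (r - m) * h₂

theorem sub_C_dvd_T_mul_add_sub (b : R) (m r j : ℤ) :
    T R m - Polynomial.C b ∣ T R (j * m + r) - (Polynomial.C ((U R j).eval b) * T R r
      - Polynomial.C ((U R (j - 1)).eval b) * T R (r - m)) := by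
  have hU (i : ℤ) :
      T R m - Polynomial.C b ∣ (U R i).comp (T R m) - Polynomial.C ((U R i).eval b) := by
    simpa using
      _root_.map_dvd (compRingHom (T R m)) (X_sub_C_dvd_sub_C_eval (p := U R i) (a := b))
  rw [T_mul_add]
  convert ((hU j).mul_right (T R r)).sub ((hU (j - 1)).mul_right (T R (r - m))) using 1
  ring

end Polynomial.Chebyshev

section AffineConj

variable {K : Type*} [Field K] (a b : K)

/-- `f_n = φ⁻¹ ∘ T_n ∘ φ` for the affine map `φ x = a x + b`. -/
noncomputable def affineConjT (n : ℤ) : K[X] :=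
  C a⁻¹ * ((Chebyshev.T K n).comp (C a * X + C b) - C b)

theorem affineConjT_neg (n : ℤ) : affineConjT a b (-n) = affineConjT a b n := by
  rw [affineConjT, affineConjT, Chebyshev.T_neg]

theorem natDegree_affineConjT [NeZero (2 : K)] (ha : a ≠ 0) (n : ℤ) :
    (affineConjT a b n).natDegree = n.natAbs := by
  rw [affineConjT, natDegree_C_mul (inv_ne_zero ha), natDegree_sub_C, natDegree_comp,
    Chebyshev.natDegree_T, natDegree_linear ha, mul_one]

theorem affineConjT_dvd_mul_add_sub (m r j : ℤ) :
    affineConjT a b m ∣ affineConjT a b (j * m + r) -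
      (C ((Chebyshev.U K j).eval b) * affineConjT a b r
        - C ((Chebyshev.U K (j - 1)).eval b) * affineConjT a b (r - m)
        + C (b / a * ((Chebyshev.U K j).eval b - (Chebyshev.U K (j - 1)).eval b - 1))) := by
  have key := mul_dvd_mul_left (C a⁻¹) <| _root_.map_dvd (compRingHom (C a * X + C b))
    (Chebyshev.sub_C_dvd_T_mul_add_sub K b m r j)
  convert key using 1
  · simp only [affineConjT, map_sub, coe_compRingHom_apply, C_comp]
  · simp only [affineConjT, map_sub, map_mul, coe_compRingHom_apply, C_comp, map_one,
      div_eq_mul_inv]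
    ring

theorem affineConjT_mul_add_mod [NeZero (2 : K)] (ha : a ≠ 0) (j : ℤ) {m r : ℤ}
    (hr : 0 < r) (hrm : r < m) :
    affineConjT a b (j * m + r) % affineConjT a b m =
      C ((Chebyshev.U K j).eval b) * affineConjT a b r
        - C ((Chebyshev.U K (j - 1)).eval b) * affineConjT a b (r - m)
        + C (b / a * ((Chebyshev.U K j).eval b - (Chebyshev.U K (j - 1)).eval b - 1)) := by
  have hdeg := natDegree_affineConjT a b ha
  have hm : affineConjT a b m ≠ 0 := ne_zero_of_natDegree_gt (n := 0) (by rw [hdeg]; omega)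
  rw [mod_eq_of_dvd_sub (affineConjT_dvd_mul_add_sub a b m r j), (mod_eq_self_iff hm).2]
  refine degree_lt_degree ?_
  refine (natDegree_add_le _ _).trans_lt <|
    max_lt ((natDegree_sub_le _ _).trans_lt <| max_lt ?_ ?_) ?_
  · exact (natDegree_C_mul_le _ _).trans_lt (by rw [hdeg, hdeg]; omega)
  · exact (natDegree_C_mul_le _ _).trans_lt (by rw [hdeg, hdeg]; omega)
  · rw [natDegree_C, hdeg]; omega

end AffineConj

theorem chebyshev_chain_mod_of_not_dvd_general (a b : ℚ) (ha : a ≠ 0)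
    (f : ℕ → ℚ[X])
    (hf : ∀ j : ℕ, f j =
      C a⁻¹ * ((Polynomial.Chebyshev.T ℚ (j : ℤ)).comp (C a * X + C b) - C b))
    (c : ℕ → ℚ)
    (hc : ∀ i : ℕ, c i = (Polynomial.Chebyshev.U ℚ ((i : ℤ) - 1)).eval b)
    (m n : ℕ) (hm : 0 < m) (hnd : ¬ m ∣ n)
    (k : ℕ) (hk : k = n / m) :
    f n % f m = C (c (k + 1)) * f (n - k * m) - C (c k) * f ((k + 1) * m - n)
        + C (b / a * (c (k + 1) - c k - 1)) := by
  have hf' (j : ℕ) : f j = affineConjT a b j := hf j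
  have hr : 0 < n % m := Nat.pos_of_ne_zero fun h => hnd (Nat.dvd_of_mod_eq_zero h)
  have hrm : n % m < m := Nat.mod_lt n hm
  have hn : n = k * m + n % m := by rw [hk, Nat.div_add_mod']
  have hn' : (n : ℤ) = k * m + (n % m : ℕ) := by exact_mod_cast hn
  have hs : ((m - n % m : ℕ) : ℤ) = -((n % m : ℕ) - m) := by push_cast [hrm.le]; ring
  rw [show n - k * m = n % m by omega, show (k + 1) * m - n = m - n % m by rw [add_mul]; omega,
    hf', hf', hf', hf', hs, affineConjT_neg, hn',
    affineConjT_mul_add_mod a b ha k (by omega) (by omega), hc, hc,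
    Nat.cast_succ, add_sub_cancel_right]

theorem chebyshev_chain_mod_of_not_dvd (a b : ℚ) (ha : a ≠ 0)
    (f : ℕ → ℚ[X])
    (hf : ∀ j : ℕ, f j =
      C a⁻¹ * ((Polynomial.Chebyshev.T ℚ (j : ℤ)).comp (C a * X + C b) - C b))
    (c : ℕ → ℚ)
    (hc : ∀ i : ℕ, c i = (Polynomial.Chebyshev.U ℚ ((i : ℤ) - 1)).eval b)
    (m n : ℕ) (hm : 0 < m) (hmn : m < n) (hnd : ¬ m ∣ n)
    (k : ℕ) (hk : k = n / m) :
    f n % f m = C (c (k + 1)) * f (n - k * m) - C (c k) * f ((k + 1) * m - n)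
        + C (b / a * (c (k + 1) - c k - 1)) :=
  chebyshev_chain_mod_of_not_dvd_general a b ha f hf c hc m n hm hnd k hk
end

section
/- Let b ∈ ℚ with b ∉ {0, 1, −1, 1/2, −1/2}, a ∈ ℚ nonzero, and f_n(x) = (1/a)(T_n(ax+b) − b). Then for all positive integers m < n, f_m(x) does not divide f_n(x) in ℚ[x]. -/
/-!
Undoing the affine change of variables, `f m ∣ f n` becomes `T m - b ∣ T n - b`. A complex root
`cos θ` of `T m - b` is then also a root of `T n - b`, so `cos (m θ) = cos (n θ) = b`. This forces
`m θ` to be a rational multiple of `π`, and Niven's theorem leaves only `b ∈ {0, ±1, ±1/2}`.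
-/

open Polynomial

theorem Polynomial.comp_C_mul_X_add_C_dvd_comp_iff {R : Type*} [CommRing R] {p q : R[X]}
    (a b : R) [Invertible a] :
    p.comp (C a * X + C b) ∣ q.comp (C a * X + C b) ↔ p ∣ q := by
  simpa [comp_eq_aeval] using map_dvd_iff (algEquivCMulXAddC a b) (a := p) (b := q)

theorem Polynomial.Chebyshev.exists_cos_eq_of_T_sub_C_dvd {c : ℂ} {m n : ℕ} (hm : 0 < m)
    (h : T ℂ m - Polynomial.C c ∣ T ℂ n - Polynomial.C c) :
    ∃ θ : ℂ, Complex.cos (m * θ) = c ∧ Complex.cos (n * θ) = c := by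
  have hdeg : 0 < (T ℂ m - Polynomial.C c).degree := by
    rw [degree_sub_C (by simpa [degree_T] using hm), degree_T]
    simpa using hm
  obtain ⟨z, hz_m⟩ := Complex.exists_root hdeg
  obtain ⟨θ, rfl⟩ := Complex.cos_surjective z
  have hz_n : (T ℂ n - Polynomial.C c).IsRoot (Complex.cos θ) := hz_m.dvd h
  refine ⟨θ, ?_, ?_⟩
  · simpa [sub_eq_zero, T_complex_cos] using hz_m
  · simpa [sub_eq_zero, T_complex_cos] using hz_n

theorem Complex.exists_rat_mul_pi_of_cos_nat_mul_eq {θ : ℂ} {m n : ℕ} (hmn : m ≠ n)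
    (h : cos (m * θ) = cos (n * θ)) : ∃ r : ℚ, (m : ℂ) * θ = ((r * Real.pi : ℝ) : ℂ) := by
  obtain ⟨k, hk | hk⟩ := cos_eq_cos_iff.mp h
  · refine ⟨2 * k * m / (n - m), ?_⟩
    have : (n : ℂ) - m ≠ 0 := sub_ne_zero.mpr (by exact_mod_cast hmn.symm)
    push_cast
    field_simp
    linear_combination (m : ℂ) * hk
  · refine ⟨2 * k * m / (n + m), ?_⟩
    have : (n : ℂ) + m ≠ 0 := by norm_cast; omega
    push_cast
    field_simp
    linear_combination (m : ℂ) * hk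

theorem Rat.mem_of_cos_rat_mul_pi_eq {r q : ℚ} (h : Real.cos (r * Real.pi) = q) :
    q ∈ ({0, 1, -1, 1/2, -1/2} : Set ℚ) := by
  have hq := niven ⟨r, rfl⟩ ⟨q, h⟩
  rw [h] at hq
  simp only [Set.mem_insert_iff, Set.mem_singleton_iff] at hq ⊢
  rcases hq with hq | hq | hq | hq | hq <;> norm_num [← Rat.cast_inj (α := ℝ), hq]

theorem chebyshev_chain_no_divisibility (a b : ℚ) (ha : a ≠ 0)
    (hb : b ∉ ({0, 1, -1, 1/2, -1/2} : Set ℚ))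
    (f : ℕ → ℚ[X])
    (hf : ∀ j : ℕ, f j =
      C a⁻¹ * ((Polynomial.Chebyshev.T ℚ (j : ℤ)).comp (C a * X + C b) - C b))
    (m n : ℕ) (hm : 0 < m) (hmn : m < n) :
    ¬ f m ∣ f n := by
  intro hdvd
  have : Invertible a := invertibleOfNonzero ha
  have hT : Chebyshev.T ℚ m - C b ∣ Chebyshev.T ℚ n - C b := by
    rw [← comp_C_mul_X_add_C_dvd_comp_iff a b, sub_comp, sub_comp, C_comp]
    rwa [hf, hf, mul_dvd_mul_iff_left (by simpa using ha)] at hdvd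
  obtain ⟨θ, hcos_m, hcos_n⟩ := Chebyshev.exists_cos_eq_of_T_sub_C_dvd hm
    (by simpa [Chebyshev.map_T] using map_dvd (algebraMap ℚ ℂ) hT)
  obtain ⟨r, hr⟩ := Complex.exists_rat_mul_pi_of_cos_nat_mul_eq hmn.ne (hcos_m.trans hcos_n.symm)
  exact hb (Rat.mem_of_cos_rat_mul_pi_eq (by exact_mod_cast hr ▸ hcos_m))
end

section
/- Let f_n(x) = 2T_n(x/2 + 1) − 2 (the chain of Chebyshev type with a = 1/2, b = 1). Then for all positive integers m, n: f_m(x) divides f_n(x) in ℚ[x] if and only if m divides n. -/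
/-!
In terms of the Vieta–Lucas polynomials `C n` (characterised by `C n (2 cos θ) = 2 cos (n θ)`),
`f n = (C n - 2) ∘ (X + 2)`. Since `C (k * m) = C k ∘ C m` and `C k (2) = 2`, `C m - 2` divides
`C (k * m) - 2`. Conversely, `2 cos (2π / m)` is a root of `C m - 2`, and it is a root of
`C n - 2` only if `cos (2π n / m) = 1`, that is, only if `m ∣ n`.
-/

open Polynomial

namespace Polynomial.Chebyshev

theorem C_sub_two_dvd_C_mul_sub_two (R : Type*) [CommRing R] (m k : ℤ) :
    C R m - 2 ∣ C R (k * m) - 2 := by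
  have h : X - Polynomial.C 2 ∣ C R k - Polynomial.C 2 := by
    simpa using X_sub_C_dvd_sub_C_eval (p := C R k) (a := 2)
  simpa [C_mul, ← Polynomial.C_ofNat] using _root_.map_dvd (compRingHom (C R m)) h

theorem dvd_of_C_sub_two_dvd {R : Type*} [CommRing R] (f : R →+* ℝ) {m n : ℤ} (hm : m ≠ 0)
    (h : C R m - 2 ∣ C R n - 2) : m ∣ n := by
  set θ := 2 * Real.pi / m
  have heval (k : ℤ) :
      ((C R k - 2).map f).eval (2 * Real.cos θ) = 2 * Real.cos (k * θ) - 2 := by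
    simp [map_C, C_two_mul_real_cos]
  have hm_root : ((C R m - 2).map f).eval (2 * Real.cos θ) = 0 := by
    rw [heval, show (m : ℝ) * θ = 2 * Real.pi by simp only [θ]; field_simp]
    simp
  have hn_root := eval_eq_zero_of_dvd_of_eval_eq_zero (Polynomial.map_dvd f h) hm_root
  obtain ⟨k, hk⟩ := (Real.cos_eq_one_iff _).1 (by rw [heval] at hn_root; linarith)
  refine ⟨k, ?_⟩
  have : (n : ℝ) = m * k := by
    simp only [θ] at hk
    field_simp at hk
    linarith
  exact_mod_cast this

theorem C_sub_two_dvd_C_sub_two_iff {R : Type*} [CommRing R] (f : R →+* ℝ) {m n : ℤ}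
    (hm : m ≠ 0) : C R m - 2 ∣ C R n - 2 ↔ m ∣ n := by
  refine ⟨dvd_of_C_sub_two_dvd f hm, ?_⟩
  rintro ⟨k, rfl⟩
  rw [mul_comm]
  exact C_sub_two_dvd_C_mul_sub_two R m k

theorem two_mul_T_comp_half_X_add_one_sub_two_eq_taylor (K : Type*) [Field K] [NeZero (2 : K)]
    (n : ℤ) :
    Polynomial.C 2 * (T K n).comp (Polynomial.C (1 / 2) * X + Polynomial.C 1) - Polynomial.C 2 =
      taylor 2 (C K n - 2) := by
  have h : (2 * X : K[X]).comp (Polynomial.C (1 / 2) * X + Polynomial.C 1) =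
      X + Polynomial.C 2 := by
    simp only [mul_comp, X_comp, ofNat_comp, mul_add, ← mul_assoc, Nat.cast_ofNat]
    rw [← _root_.map_ofNat Polynomial.C, ← Polynomial.C_mul, ← Polynomial.C_mul]
    simp [two_ne_zero]
  rw [taylor_apply, sub_comp, ← h, ← comp_assoc, C_comp_two_mul_X, _root_.map_ofNat, mul_comp,
    ofNat_comp, ofNat_comp]
  norm_num

end Polynomial.Chebyshev

theorem F_dvd_iff_general (f : ℕ → ℚ[X])
    (hf : ∀ j : ℕ, f j =
      C 2 * (Polynomial.Chebyshev.T ℚ (j : ℤ)).comp (C (1/2) * X + C 1) - C 2)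
    (m n : ℕ) (hm : 0 < m) :
    f m ∣ f n ↔ m ∣ n := by
  simp only [hf, Chebyshev.two_mul_T_comp_half_X_add_one_sub_two_eq_taylor]
  exact (map_dvd_iff (taylorEquiv (2 : ℚ))).trans <|
    (Chebyshev.C_sub_two_dvd_C_sub_two_iff (algebraMap ℚ ℝ) (by exact_mod_cast hm.ne')).trans
      Int.natCast_dvd_natCast

theorem F_dvd_iff (f : ℕ → ℚ[X])
    (hf : ∀ j : ℕ, f j =
      C 2 * (Polynomial.Chebyshev.T ℚ (j : ℤ)).comp (C (1/2) * X + C 1) - C 2)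
    (m n : ℕ) (hm : 0 < m) (hn : 0 < n) :
    f m ∣ f n ↔ m ∣ n :=
  F_dvd_iff_general f hf m n hm
end

section
/- Let f_n(x) = 2T_n(x/2 + 1/2) − 1 (the chain of Chebyshev type with a = b = 1/2). Then for positive integers m < n, f_m(x) divides f_n(x) in ℚ[x] if and only if m ∣ n and gcd(n/m, 6) = 1. -/
open Polynomial Real

/-! With `L x = (x + 1) / 2` we have `f_j = L⁻¹ ∘ T_j ∘ L`, so `f_j (2 cos θ - 1) = 2 cos (j θ) - 1`
and `f_{mq} = f_q ∘ f_m`. If `n = m q` with `q` prime to 6, then `f_q 0 = 2 cos (q π / 3) - 1 = 0`,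
so `X ∣ f_q` and `f_m ∣ f_q ∘ f_m`. Conversely `2 cos (π / (3 m)) - 1` is a root of `f_m`, hence
of `f_n`, so `cos ((n / m) π / 3) = 1 / 2`, which forces `n / m` to be an integer `≡ ±1 (mod 6)`. -/

noncomputable def chebyshevChain (j : ℕ) : ℚ[X] :=
  C 2 * (Chebyshev.T ℚ (j : ℤ)).comp (C (1/2) * X + C (1/2)) - C 1

theorem Polynomial.dvd_comp_of_eval_zero {R : Type*} [CommRing R] {p : R[X]} (q : R[X])
    (hp : p.eval 0 = 0) : q ∣ p.comp q := by
  obtain ⟨r, rfl⟩ : X ∣ p := by rwa [X_dvd_iff, coeff_zero_eq_eval_zero]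
  exact ⟨r.comp q, by rw [mul_comp, X_comp]⟩

theorem chebyshevChain_mul (m q : ℕ) :
    chebyshevChain (m * q) = (chebyshevChain q).comp (chebyshevChain m) := by
  have affine : (C (1/2 : ℚ) * X + C (1/2)).comp (chebyshevChain m) =
      (Chebyshev.T ℚ (m : ℤ)).comp (C (1/2) * X + C (1/2)) := by
    simp only [chebyshevChain, add_comp, mul_comp, C_comp, X_comp]
    rw [mul_sub, ← mul_assoc, ← C_mul, ← C_mul]
    norm_num
  rw [chebyshevChain, chebyshevChain, sub_comp, mul_comp, C_comp, C_comp, comp_assoc, affine,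
    ← comp_assoc, mul_comm (m : ℕ), Nat.cast_mul, Chebyshev.T_mul]

theorem chebyshevChain_map_eval_cos (j : ℕ) (θ : ℝ) :
    ((chebyshevChain j).map (algebraMap ℚ ℝ)).eval (2 * cos θ - 1) = 2 * cos (j * θ) - 1 := by
  have half : (1 / 2 : ℝ) * (2 * cos θ - 1) + 1 / 2 = cos θ := by ring
  simp only [chebyshevChain, Polynomial.map_sub, Polynomial.map_mul, Polynomial.map_comp,
    Polynomial.map_add, map_C, map_X, Chebyshev.map_T, eval_sub, eval_mul, eval_C, eval_comp,
    eval_add, eval_X, map_div₀, map_one, map_ofNat, Polynomial.map_one, Polynomial.map_ofNat,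
    eval_one, eval_ofNat, half, Chebyshev.T_real_cos, Int.cast_natCast]

theorem Real.cos_mul_pi_div_three_eq_half_iff (x : ℝ) :
    cos (x * (π / 3)) = 1 / 2 ↔ ∃ a : ℤ, x = a ∧ (a % 6 = 1 ∨ a % 6 = 5) := by
  have hπ : π / 3 ≠ 0 := by positivity
  rw [← cos_pi_div_three, eq_comm, cos_eq_cos_iff]
  constructor
  · rintro ⟨k, hk | hk⟩
    · refine ⟨6 * k + 1, mul_right_cancel₀ hπ ?_, by omega⟩
      push_cast
      linear_combination hk
    · refine ⟨6 * k - 1, mul_right_cancel₀ hπ ?_, by omega⟩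
      push_cast
      linear_combination hk
  · rintro ⟨a, rfl, ha | ha⟩
    · obtain ⟨k, rfl⟩ : ∃ k, a = 6 * k + 1 := ⟨a / 6, by omega⟩
      exact ⟨k, Or.inl (by push_cast; ring)⟩
    · obtain ⟨k, rfl⟩ : ∃ k, a = 6 * k - 1 := ⟨a / 6 + 1, by omega⟩
      exact ⟨k, Or.inr (by push_cast; ring)⟩

theorem Nat.coprime_six_iff (r : ℕ) : r.Coprime 6 ↔ r % 6 = 1 ∨ r % 6 = 5 := by
  rw [Nat.Coprime, Nat.gcd_comm, Nat.gcd_rec]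
  have : r % 6 < 6 := Nat.mod_lt r (by norm_num)
  generalize r % 6 = s at *
  interval_cases s <;> decide

theorem chebyshevChain_eval_zero_of_coprime {q : ℕ} (hq : Nat.Coprime q 6) :
    (chebyshevChain q).eval 0 = 0 := by
  have hq' := (Nat.coprime_six_iff q).1 hq
  have hcos : cos (q * (π / 3)) = 1 / 2 :=
    (cos_mul_pi_div_three_eq_half_iff _).2 ⟨q, by push_cast; rfl, by omega⟩
  apply (algebraMap ℚ ℝ).injective
  have h0 : (0 : ℝ) = 2 * cos (π / 3) - 1 := by norm_num
  rw [← eval_zero_map, map_zero, h0, chebyshevChain_map_eval_cos, hcos]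
  norm_num

theorem Nat.dvd_and_gcd_div_six_of_div_eq {m n : ℕ} (hm : 0 < m) {a : ℤ}
    (ha : a % 6 = 1 ∨ a % 6 = 5) (h : (n : ℝ) / m = a) : m ∣ n ∧ Nat.gcd (n / m) 6 = 1 := by
  have hnm : (n : ℤ) = m * a := by
    rw [div_eq_iff (by positivity), mul_comm] at h
    exact_mod_cast h
  lift a to ℕ using nonneg_of_mul_nonneg_right (hnm ▸ n.cast_nonneg) (by exact_mod_cast hm)
  obtain rfl : n = m * a := by exact_mod_cast hnm
  rw [Nat.mul_div_cancel_left a hm]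
  exact ⟨dvd_mul_right m a, (Nat.coprime_six_iff a).2 (by omega)⟩

theorem chebyshev_chain_half_dvd_iff_general (f : ℕ → ℚ[X])
    (hf : ∀ j : ℕ, f j =
      C 2 * (Polynomial.Chebyshev.T ℚ (j : ℤ)).comp (C (1/2) * X + C (1/2)) - C 1)
    (m n : ℕ) (hm : 0 < m) :
    f m ∣ f n ↔ m ∣ n ∧ Nat.gcd (n / m) 6 = 1 := by
  obtain rfl : f = chebyshevChain := funext hf
  constructor
  · intro h
    have hm' : (m : ℝ) ≠ 0 := by positivity
    have hmθ : m * (π / (3 * m)) = π / 3 := by field_simp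
    have hnθ : n * (π / (3 * m)) = n / m * (π / 3) := by field_simp
    have hroot := eval_eq_zero_of_dvd_of_eval_eq_zero (map_dvd (algebraMap ℚ ℝ) h)
      (x := 2 * cos (π / (3 * m)) - 1)
      (by rw [chebyshevChain_map_eval_cos, hmθ, cos_pi_div_three]; norm_num)
    rw [chebyshevChain_map_eval_cos, hnθ, sub_eq_zero] at hroot
    obtain ⟨a, ha, ha6⟩ := (cos_mul_pi_div_three_eq_half_iff (n / m)).1 (by linarith)
    exact Nat.dvd_and_gcd_div_six_of_div_eq hm ha6 ha
  · rintro ⟨⟨q, rfl⟩, hq⟩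
    rw [Nat.mul_div_cancel_left q hm] at hq
    rw [chebyshevChain_mul]
    exact dvd_comp_of_eval_zero _ (chebyshevChain_eval_zero_of_coprime hq)

theorem chebyshev_chain_half_dvd_iff (f : ℕ → ℚ[X])
    (hf : ∀ j : ℕ, f j =
      C 2 * (Polynomial.Chebyshev.T ℚ (j : ℤ)).comp (C (1/2) * X + C (1/2)) - C 1)
    (m n : ℕ) (hm : 0 < m) (hmn : m < n) :
    f m ∣ f n ↔ m ∣ n ∧ Nat.gcd (n / m) 6 = 1 :=
  chebyshev_chain_half_dvd_iff_general f hf m n hm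
end

section
/- Let F_n(x) = 2T_n(x/2 + 1) − 2 and let m, n be positive integers. Then gcd(F_m(x), F_n(x)) = F_{gcd(m,n)}(x) in ℚ[x] (up to units, taking all polynomials monic). -/
/-!
Put `w j = T_j(x/2 + 1)`, so that `F_j = 2 (w j - 1)`. The product formula
`2 T_a T_b = T_{a+b} + T_{a-b}` says that `w` solves d'Alembert's functional equation, and for
any such sequence the indices `j` with `d ∣ w j - 1` form a subgroup of `ℤ`. Closure under
addition: `d` divides `w (a+b) + w (a-b) - 2 = 2 w a w b - 2`, and `d²` divides
`(w (a+b) - w (a-b))² = 4 (w a ² - 1) (w b ² - 1)`, hence `d` divides `w (a+b) - w (a-b)`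
because `ℚ[X]` is integrally closed; as `2` is a unit, `d ∣ w (a+b) - 1`. So `F_m` and `F_n`
have the same common divisors as `F_{gcd(m,n)}`, which is monic (or zero).
-/

open Polynomial

structure IsCosineSeq {R : Type*} [CommRing R] (w : ℤ → R) : Prop where
  map_zero : w 0 = 1
  two_mul_mul : ∀ a b, 2 * w a * w b = w (a + b) + w (a - b)

namespace IsCosineSeq

variable {R : Type*} [CommRing R] {w : ℤ → R}

theorem map_neg (hw : IsCosineSeq w) (a : ℤ) : w (-a) = w a := by
  have h := hw.two_mul_mul 0 a
  rw [hw.map_zero, zero_add, zero_sub] at h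
  linear_combination -h

theorem sub_sq (hw : IsCosineSeq w) (a b : ℤ) :
    (w (a + b) - w (a - b)) ^ 2 = 4 * (w a ^ 2 - 1) * (w b ^ 2 - 1) := by
  have hab := hw.two_mul_mul (a + b) (a - b)
  have haa := hw.two_mul_mul a a
  have hbb := hw.two_mul_mul b b
  rw [add_add_sub_cancel, add_sub_sub_cancel, ← two_mul, ← two_mul] at hab
  rw [sub_self, hw.map_zero, ← two_mul] at haa hbb
  linear_combination -(w (a + b) + w (a - b) + 2 * w a * w b) * hw.two_mul_mul a b
    - 2 * hab + 2 * haa + 2 * hbb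

variable [IsDomain R] [IsIntegrallyClosed R]

theorem dvd_sub_one_add (hw : IsCosineSeq w) (h2 : IsUnit (2 : R)) {d : R} {a b : ℤ}
    (ha : d ∣ w a - 1) (hb : d ∣ w b - 1) :
    d ∣ w (a + b) - 1 := by
  have hsum : d ∣ w (a + b) + w (a - b) - 2 := by
    rw [← hw.two_mul_mul, show 2 * w a * w b - 2 = 2 * w b * (w a - 1) + 2 * (w b - 1) by ring]
    exact dvd_add (dvd_mul_of_dvd_right ha _) (dvd_mul_of_dvd_right hb _)
  have hdiff : d ∣ w (a + b) - w (a - b) := by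
    rw [← IsIntegrallyClosed.pow_dvd_pow_iff two_ne_zero, hw.sub_sq,
      show 4 * (w a ^ 2 - 1) * (w b ^ 2 - 1) =
        (w a - 1) * (w b - 1) * (4 * (w a + 1) * (w b + 1)) by ring, sq]
    exact dvd_mul_of_dvd_left (mul_dvd_mul ha hb) _
  rw [← h2.dvd_mul_left, show 2 * (w (a + b) - 1) =
    (w (a + b) + w (a - b) - 2) + (w (a + b) - w (a - b)) by ring]
  exact dvd_add hsum hdiff

def dvdSubOneSubgroup (hw : IsCosineSeq w) (h2 : IsUnit (2 : R)) (d : R) : AddSubgroup ℤ where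
  carrier := {j | d ∣ w j - 1}
  zero_mem' := by simp [hw.map_zero]
  add_mem' := hw.dvd_sub_one_add h2
  neg_mem' := by simp [hw.map_neg]

theorem dvd_sub_one_gcd_iff (hw : IsCosineSeq w) (h2 : IsUnit (2 : R)) (d : R) (m n : ℤ) :
    d ∣ w (m.gcd n) - 1 ↔ d ∣ w m - 1 ∧ d ∣ w n - 1 := by
  let H := hw.dvdSubOneSubgroup h2 d
  have mem_of_dvd {a b : ℤ} (ha : a ∈ H) (hab : a ∣ b) : b ∈ H := by
    obtain ⟨k, rfl⟩ := hab
    simpa [mul_comm] using H.zsmul_mem ha k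
  refine ⟨fun hg => ⟨mem_of_dvd hg (m.gcd_dvd_left n), mem_of_dvd hg (m.gcd_dvd_right n)⟩,
    fun ⟨hm, hn⟩ => ?_⟩
  change _ ∈ H
  rw [Int.gcd_eq_gcd_ab, mul_comm m, mul_comm n]
  exact H.add_mem (H.zsmul_mem hm _) (H.zsmul_mem hn _)

end IsCosineSeq

theorem isCosineSeq_T_comp {R : Type*} [CommRing R] (q : R[X]) :
    IsCosineSeq fun j => (Chebyshev.T R j).comp q where
  map_zero := by simp
  two_mul_mul a b := by
    simpa [mul_comp, add_comp] using congrArg (·.comp q) (Chebyshev.T_mul_T R a b)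

theorem monic_C_two_mul_T_comp_sub_C_two {K : Type*} [Field K] [NeZero (2 : K)] {n : ℤ}
    (hn : n ≠ 0) : (C 2 * (Chebyshev.T K n).comp (C (1 / 2) * X + C 1) - C 2).Monic := by
  have hhalf : (1 / 2 : K) ≠ 0 := one_div_ne_zero two_ne_zero
  have hq : (C (1 / 2 : K) * X + C 1).natDegree = 1 := natDegree_linear hhalf
  have hdeg : (C 2 * (Chebyshev.T K n).comp (C (1 / 2) * X + C 1)).natDegree = n.natAbs := by
    rw [natDegree_C_mul two_ne_zero, natDegree_comp, hq, Chebyshev.natDegree_T, mul_one]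
  refine Monic.sub_of_left ?_ ?_
  · rw [Monic, leadingCoeff_mul, leadingCoeff_C,
      leadingCoeff_comp (by rw [hq]; exact one_ne_zero), Chebyshev.leadingCoeff_T,
      Chebyshev.natDegree_T, leadingCoeff_linear hhalf]
    obtain ⟨k, hk⟩ := Nat.exists_eq_add_one.2 (Int.natAbs_pos.2 hn)
    rw [hk, Nat.add_sub_cancel, one_div, inv_pow, pow_succ]
    field_simp
  · rw [degree_C two_ne_zero]
    exact natDegree_pos_iff_degree_pos.1 (hdeg ▸ Int.natAbs_pos.2 hn)

theorem F_gcd_general (F : ℕ → ℚ[X])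
    (hF : ∀ j : ℕ, F j =
      C 2 * (Polynomial.Chebyshev.T ℚ (j : ℤ)).comp (C (1/2) * X + C 1) - C 2)
    (m n : ℕ) :
    gcd (F m) (F n) = F (Nat.gcd m n) := by
  set w : ℤ → ℚ[X] := fun j => (Chebyshev.T ℚ j).comp (C (1 / 2) * X + C 1)
  have hw : IsCosineSeq w := isCosineSeq_T_comp _
  have h2 : IsUnit (2 : ℚ[X]) := isUnit_C.2 (isUnit_iff_ne_zero.2 two_ne_zero)
  have hdvd (d : ℚ[X]) (j : ℕ) : d ∣ F j ↔ d ∣ w j - 1 := by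
    rw [show F j = 2 * (w j - 1) by rw [hF, map_ofNat C 2]; ring, h2.dvd_mul_left]
  have hcommon (d : ℚ[X]) : d ∣ F (m.gcd n) ↔ d ∣ F m ∧ d ∣ F n := by
    simpa only [hdvd, Int.gcd_natCast_natCast] using hw.dvd_sub_one_gcd_iff h2 d m n
  have hnormal : normalize (F (m.gcd n)) = F (m.gcd n) := by
    rcases Nat.eq_zero_or_pos (m.gcd n) with h0 | hpos
    · simp [h0, hF]
    · rw [hF]
      exact (monic_C_two_mul_T_comp_sub_C_two (by omega)).normalize_eq_self
  rw [← normalize_gcd, ← hnormal, normalize_eq_normalize_iff]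
  exact ⟨(hcommon _).2 ⟨gcd_dvd_left _ _, gcd_dvd_right _ _⟩,
    dvd_gcd_iff _ _ _ |>.2 ((hcommon _).1 dvd_rfl)⟩

theorem F_gcd (F : ℕ → ℚ[X])
    (hF : ∀ j : ℕ, F j =
      C 2 * (Polynomial.Chebyshev.T ℚ (j : ℤ)).comp (C (1/2) * X + C 1) - C 2)
    (m n : ℕ) (hm : 0 < m) (hn : 0 < n) :
    gcd (F m) (F n) = F (Nat.gcd m n) :=
  F_gcd_general F hF m n
end

section
/- Let a, b ∈ ℚ with a ≠ 0 and f_n(x) = (1/a)((ax+b)^n − b). Then: (1) every f_n is monic iff a = 1; (2) all f_n have integer coefficients iff a, b ∈ ℤ and a ∣ b(b−1). -/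
/-!
Writing `λ = a X + b`, the binomial theorem gives every coefficient of `f_n = a⁻¹ (λⁿ - b)`:
for `i ≥ 1` it is `C(n, i) aⁱ⁻¹ bⁿ⁻ⁱ` and the constant term is `(bⁿ - b) / a`. So `f_n` has
degree `n` and leading coefficient `aⁿ⁻¹`, which gives the monicity criterion (take `n = 2`).
For integrality, `f_2 = a X² + 2b X + b(b - 1)/a` forces `a ∈ ℤ` and `b(b - 1)/a ∈ ℤ`; then `b` is
a rational root of the monic `X² - X - b(b - 1)` over `ℤ`, hence an integer. Conversely
`b(b - 1) ∣ bⁿ - b` makes every constant term integral.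
-/

open Polynomial

theorem Polynomial.coeff_C_mul_X_add_C_pow {R : Type*} [CommSemiring R] (a b : R) (n i : ℕ) :
    ((C a * X + C b) ^ n).coeff i = n.choose i * a ^ i * b ^ (n - i) := by
  have hterm (m : ℕ) : (C a * X) ^ m * C b ^ (n - m) * (n.choose m : R[X]) =
      C (n.choose m * a ^ m * b ^ (n - m)) * X ^ m := by
    simp only [C_mul, C_pow, ← C_eq_natCast, mul_pow]
    ring
  rw [add_pow, Finset.sum_congr rfl fun m _ => hterm m, finsetSum_coeff]
  simp only [coeff_C_mul_X_pow, Finset.sum_ite_eq, Finset.mem_range]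
  split_ifs with hi
  · rfl
  · simp [Nat.choose_eq_zero_of_lt (by omega : n < i)]

theorem mul_sub_one_dvd_pow_sub_self {R : Type*} [CommRing R] (b : R) {n : ℕ} (hn : n ≠ 0) :
    b * (b - 1) ∣ b ^ n - b := by
  obtain ⟨k, rfl⟩ := Nat.exists_eq_add_one_of_ne_zero hn
  convert mul_dvd_mul_left b (sub_dvd_pow_sub_pow b 1 k) using 1
  ring

theorem Rat.exists_int_eq_of_mul_sub_one_eq_int {b : ℚ} {m : ℤ} (h : b * (b - 1) = m) :
    ∃ z : ℤ, b = z := by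
  have hdeg : (X + C m : ℤ[X]).degree < (2 : ℕ) := by
    rw [degree_X_add_C]
    norm_num
  have hroot : (X ^ 2 - (X + C m)).eval₂ (algebraMap ℤ ℚ) b = 0 := by
    rw [eval₂_sub, eval₂_add, eval₂_X_pow, eval₂_X, eval₂_C, algebraMap_int_eq, eq_intCast, ← h]
    ring
  obtain ⟨z, hz⟩ := IsIntegrallyClosed.algebraMap_eq_of_integral
    ⟨X ^ 2 - (X + C m), monic_X_pow_sub hdeg, hroot⟩
  exact ⟨z, hz.symm⟩

noncomputable def monomialChain {K : Type*} [Field K] (a b : K) (n : ℕ) : K[X] :=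
  C a⁻¹ * ((C a * X + C b) ^ n - C b)

section monomialChain

variable {K : Type*} [Field K] {a b : K}

theorem coeff_monomialChain_zero (n : ℕ) :
    (monomialChain a b n).coeff 0 = (b ^ n - b) / a := by
  rw [monomialChain, coeff_C_mul, coeff_sub, coeff_C_mul_X_add_C_pow, coeff_C_zero]
  simp [div_eq_inv_mul]

theorem coeff_monomialChain_of_pos (ha : a ≠ 0) (n : ℕ) {i : ℕ} (hi : 0 < i) :
    (monomialChain a b n).coeff i = n.choose i * a ^ (i - 1) * b ^ (n - i) := by
  obtain ⟨j, rfl⟩ := Nat.exists_eq_add_one_of_ne_zero hi.ne'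
  rw [monomialChain, coeff_C_mul, coeff_sub, coeff_C_mul_X_add_C_pow, coeff_C_of_ne_zero hi.ne',
    sub_zero, Nat.add_sub_cancel, pow_succ]
  field_simp

theorem natDegree_monomialChain (ha : a ≠ 0) (n : ℕ) : (monomialChain a b n).natDegree = n := by
  rw [monomialChain, natDegree_C_mul (inv_ne_zero ha), natDegree_sub_C, natDegree_pow,
    natDegree_linear ha, mul_one]

theorem leadingCoeff_monomialChain (ha : a ≠ 0) {n : ℕ} (hn : n ≠ 0) :
    (monomialChain a b n).leadingCoeff = a ^ (n - 1) := by
  rw [leadingCoeff, natDegree_monomialChain ha,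
    coeff_monomialChain_of_pos ha n (pos_of_ne_zero hn)]
  simp

theorem forall_monic_monomialChain_iff (ha : a ≠ 0) :
    (∀ n : ℕ, 1 ≤ n → (monomialChain a b n).Monic) ↔ a = 1 := by
  constructor
  · intro h
    simpa [Monic, leadingCoeff_monomialChain ha] using h 2 one_le_two
  · rintro rfl n hn
    rw [Monic, leadingCoeff_monomialChain one_ne_zero (by omega), one_pow]

end monomialChain

theorem forall_coeff_monomialChain_int_iff {a b : ℚ} (ha : a ≠ 0) :
    (∀ n : ℕ, 1 ≤ n → ∀ i : ℕ, ∃ z : ℤ, (monomialChain a b n).coeff i = z) ↔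
      (∃ za : ℤ, a = za) ∧ (∃ zb : ℤ, b = zb) ∧ ∃ z : ℤ, b * (b - 1) / a = z := by
  constructor
  · intro h
    obtain ⟨za, hza⟩ := h 2 one_le_two 2
    obtain ⟨z, hz⟩ := h 2 one_le_two 0
    replace hza : a = za := by simpa [coeff_monomialChain_of_pos ha] using hza
    rw [coeff_monomialChain_zero, sq, ← mul_sub_one] at hz
    obtain ⟨zb, hzb⟩ := Rat.exists_int_eq_of_mul_sub_one_eq_int (b := b) (m := za * z) <| by
      rw [Int.cast_mul, ← hz, ← hza]
      field_simp
    exact ⟨⟨za, hza⟩, ⟨zb, hzb⟩, ⟨z, hz⟩⟩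
  · rintro ⟨⟨za, rfl⟩, ⟨zb, rfl⟩, ⟨z, hz⟩⟩ n hn i
    rcases i.eq_zero_or_pos with rfl | hi
    · have hdvd : za ∣ zb * (zb - 1) := ⟨z, by
        rw [div_eq_iff ha] at hz
        exact_mod_cast hz.trans (mul_comm _ _)⟩
      obtain ⟨w, hw⟩ := hdvd.trans (mul_sub_one_dvd_pow_sub_self zb (by omega : n ≠ 0))
      refine ⟨w, ?_⟩
      rw [coeff_monomialChain_zero, div_eq_iff ha, mul_comm]
      exact_mod_cast hw
    · exact ⟨n.choose i * za ^ (i - 1) * zb ^ (n - i), by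
        rw [coeff_monomialChain_of_pos ha n hi]
        push_cast
        rfl⟩

theorem monomial_chain_monic_int (a b : ℚ) (ha : a ≠ 0)
    (f : ℕ → ℚ[X])
    (hf : ∀ j : ℕ, f j = C a⁻¹ * ((C a * X + C b) ^ j - C b)) :
    ((∀ n : ℕ, 1 ≤ n → (f n).Monic) ↔ a = 1) ∧
    ((∀ n : ℕ, 1 ≤ n → ∀ i : ℕ, ∃ z : ℤ, (f n).coeff i = (z : ℚ)) ↔
      (∃ za : ℤ, a = (za : ℚ)) ∧ (∃ zb : ℤ, b = (zb : ℚ)) ∧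
        (∃ z : ℤ, b * (b - 1) / a = (z : ℚ))) := by
  obtain rfl : f = monomialChain a b := funext hf
  exact ⟨forall_monic_monomialChain_iff ha, forall_coeff_monomialChain_int_iff ha⟩
end

section
/- Let a, b ∈ ℚ with a ≠ 0, f_n(x) = (1/a)((ax+b)^n − b), and m ≤ n positive integers with k = ⌊n/m⌋. The quotient and remainder of the Euclidean division of f_n by f_m are q(x) = a·Σ_{i=1}^{k} b^{i−1} f_{n−im}(x) + Σ_{i=1}^{k} b^i and r(x) = b^k f_{n−km}(x) + (b^{k+1} − b)/a. -/
open Polynomial Finset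

theorem monomial_chain_div_mod (a b : ℚ) (ha : a ≠ 0)
    (f : ℕ → ℚ[X])
    (hf : ∀ j : ℕ, f j = C a⁻¹ * ((C a * X + C b) ^ j - C b))
    (m n : ℕ) (hm : 0 < m) (hmn : m ≤ n) (k : ℕ) (hk : k = n / m) :
    f n / f m = C a * (∑ i ∈ Finset.Icc 1 k, C (b ^ (i - 1)) * f (n - i * m))
        + C (∑ i ∈ Finset.Icc 1 k, b ^ i) ∧
    f n % f m = C (b ^ k) * f (n - k * m) + C ((b ^ (k + 1) - b) / a) := by
  have ha'' : a⁻¹ ≠ 0 := inv_ne_zero ha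
  have hCa : C a * C a⁻¹ = (1 : ℚ[X]) := by
    rw [← C_mul, mul_inv_cancel₀ ha, C_1]
  set u : ℚ[X] := C a * X + C b with hu
  have hdu : u.degree = 1 := by rw [hu]; compute_degree!
  have hdup : ∀ j : ℕ, (u ^ j).degree = j := by
    intro j; rw [degree_pow, hdu]; simp [mul_comm]
  have hdfle : ∀ j : ℕ, (f j).degree ≤ j := by
    intro j
    rw [hf j]
    refine le_trans (degree_mul_le _ _) ?_
    have h1 : (u ^ j - C b).degree ≤ j := by
      refine le_trans (degree_sub_le _ _) (max_le (le_of_eq (hdup j)) ?_)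
      exact le_trans degree_C_le (by exact_mod_cast j.zero_le)
    calc (C a⁻¹).degree + (u ^ j - C b).degree ≤ 0 + (j : WithBot ℕ) :=
          add_le_add degree_C_le h1
      _ = j := by simp
  have hdfm : (f m).degree = m := by
    rw [hf m, degree_mul, degree_C ha'']
    have h2 : (u ^ m - C b).degree = m := by
      rw [sub_eq_add_neg, degree_add_eq_left_of_degree_lt, hdup m]
      rw [hdup m, degree_neg]
      exact lt_of_le_of_lt degree_C_le (by exact_mod_cast hm)
    rw [h2]; simp
  have hfm0 : f m ≠ 0 := fun h => by
    rw [h, degree_zero] at hdfm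
    simp at hdfm
  set Q : ℚ[X] := C a * (∑ i ∈ Finset.Icc 1 k, C (b ^ (i - 1)) * f (n - i * m))
        + C (∑ i ∈ Finset.Icc 1 k, b ^ i) with hQ
  set R : ℚ[X] := C (b ^ k) * f (n - k * m) + C ((b ^ (k + 1) - b) / a) with hR
  set g : ℕ → ℚ[X] := fun i => C (b ^ i) * u ^ (n - i * m) with hg
  have hkm : k * m ≤ n := by rw [hk]; exact Nat.div_mul_le_self n m
  -- rewrite Q as a range sum
  have hQ' : Q = ∑ i ∈ Finset.range k, C (b ^ i) * u ^ (n - (1 + i) * m) := by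
    rw [hQ, ← Finset.Ico_add_one_right_eq_Icc, Finset.sum_Ico_eq_sum_range,
      Finset.sum_Ico_eq_sum_range]
    simp only [Nat.add_sub_cancel, Nat.add_sub_cancel_left, Nat.succ_sub_one]
    rw [Finset.mul_sum, map_sum, ← Finset.sum_add_distrib]
    · refine Finset.sum_congr rfl fun i _ => ?_
      rw [hf (n - (1 + i) * m)]
      simp only [pow_add, pow_one, C_mul, C_pow]
      linear_combination (C b) ^ i * (u ^ (n - (1 + i) * m) - C b) * hCa
  -- key telescoping step
  have hstep : ∀ i ∈ Finset.range k,
      f m * (C (b ^ i) * u ^ (n - (1 + i) * m)) = C a⁻¹ * (g i - g (i + 1)) := by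
    intro i hi
    have hik : i + 1 ≤ k := Finset.mem_range.mp hi
    have him : (i + 1) * m ≤ n := le_trans (Nat.mul_le_mul_right m hik) hkm
    have hsm : (i + 1) * m = i * m + m := by ring
    have hexp : n - i * m = m + (n - (1 + i) * m) := by
      rw [show (1 + i) * m = i * m + m from by ring]
      omega
    rw [hf m, hg]
    simp only
    rw [hexp, pow_add, show (1 + i) * m = (i + 1) * m from by ring]
    simp only [pow_succ, C_mul, C_pow]
    ring
  have hfmQ : f m * Q = C a⁻¹ * (u ^ n - g k) := by
    rw [hQ', Finset.mul_sum, Finset.sum_congr rfl hstep, ← Finset.mul_sum,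
      Finset.sum_range_sub' g]
    have : g 0 = u ^ n := by simp [hg]
    rw [this]
  have hRe : R = C a⁻¹ * (g k - C b) := by
    rw [hR, hf (n - k * m), div_eq_inv_mul, C_mul, C_sub, hg]
    simp only [pow_succ, C_mul, C_pow]
    ring
  have hmain : R + f m * Q = f n := by
    rw [hRe, hfmQ, hf n]; ring
  -- degree bound on R
  have hnkm : n - k * m = n % m := by
    have h2 : k * m = m * (n / m) := by rw [hk, mul_comm]
    have h3 := Nat.div_add_mod n m
    omega
  have hdR : R.degree < (f m).degree := by
    rw [hdfm]
    refine lt_of_le_of_lt (degree_add_le _ _) (max_lt ?_ ?_)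
    · refine lt_of_le_of_lt (degree_mul_le _ _) ?_
      have h4 : (f (n - k * m)).degree ≤ (n % m : ℕ) := by
        rw [hnkm] at *; exact hdfle _
      calc (C (b ^ k)).degree + (f (n - k * m)).degree
          ≤ 0 + ((n % m : ℕ) : WithBot ℕ) := add_le_add degree_C_le h4
        _ = ((n % m : ℕ) : WithBot ℕ) := by simp
        _ < m := by exact_mod_cast Nat.mod_lt n hm
    · exact lt_of_le_of_lt degree_C_le (by exact_mod_cast hm)
  -- uniqueness of division
  set c : ℚ := (f m).leadingCoeff with hc
  have hc0 : c ≠ 0 := leadingCoeff_ne_zero.mpr hfm0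
  have hmon : Monic (f m * C c⁻¹) := monic_mul_leadingCoeff_inv hfm0
  have hdeg' : (f m * C c⁻¹).degree = (f m).degree :=
    degree_mul_leadingCoeff_inv _ hfm0
  have huniq := Polynomial.div_modByMonic_unique (f := f n) (g := f m * C c⁻¹)
    (C c * Q) R hmon ⟨by
      rw [mul_assoc, ← mul_assoc (C c⁻¹), ← C_mul, inv_mul_cancel₀ hc0, C_1,
        one_mul, hmain],
      by rw [hdeg']; exact hdR⟩
  constructor
  · rw [Polynomial.div_def, ← hc, huniq.1, ← mul_assoc, ← C_mul,
      inv_mul_cancel₀ hc0, C_1, one_mul]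
  · rw [Polynomial.mod_def, ← hc, huniq.2]
end

section
/- Let b ∈ ℚ with b ∉ {0, 1, −1} and f_n(x) = (x+b)^n − b. Then for positive integers m < n, f_m(x) and f_n(x) are coprime in ℚ[x]; moreover for b = −1, gcd(f_m, f_n) = f_{gcd(m,n)} when m/gcd(m,n) and n/gcd(m,n) are both odd, and f_m, f_n are coprime otherwise. -/
open Polynomial

lemma dvd_pow_gcd_sub_one {R : Type*} [CommRing R] (y g : R) :
    ∀ M N : ℕ, g ∣ y ^ M - 1 → g ∣ y ^ N - 1 → g ∣ y ^ (Nat.gcd M N) - 1 := by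
  intro M N
  induction M, N using Nat.gcd.induction with
  | H0 n => intro _ h; simpa using h
  | H1 m n hm ih =>
    intro h1 h2
    rw [Nat.gcd_rec]
    refine ih ?_ h1
    have hd : g ∣ y ^ (m * (n / m)) - 1 := by
      obtain ⟨c, hc⟩ := sub_dvd_pow_sub_pow (y ^ m) 1 (n / m)
      exact h1.trans ⟨c, by rw [← hc, pow_mul, one_pow]⟩
    have hpow : y ^ (n % m) * y ^ (m * (n / m)) = y ^ n := by
      rw [← pow_add, Nat.mod_add_div]
    have key : y ^ (n % m) - 1 = (y ^ n - 1) - y ^ (n % m) * (y ^ (m * (n / m)) - 1) := by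
      linear_combination hpow
    rw [key]
    exact dvd_sub h2 (Dvd.dvd.mul_left hd _)


lemma part1 (b : ℚ) (hb0 : b ≠ 0) (hb1 : b ≠ 1) (hbm1 : b ≠ -1)
    (m n : ℕ) (hm : 0 < m) (hmn : m < n) :
    IsCoprime ((X + C b) ^ m - C b) ((X + C b) ^ n - C b) := by
  by_contra hco
  rw [← gcd_isUnit_iff] at hco
  set p : ℚ[X] := (X + C b) ^ m - C b with hp
  set q : ℚ[X] := (X + C b) ^ n - C b with hq
  have hp0 : p ≠ 0 := by
    intro h
    have h2 : ((X + C b) ^ m : ℚ[X]) = C b := by rwa [hp, sub_eq_zero] at h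
    have := congrArg natDegree h2
    rw [natDegree_pow, natDegree_X_add_C, natDegree_C, mul_one] at this
    omega
  have hg0 : gcd p q ≠ 0 := fun h => hp0 ((gcd_eq_zero_iff p q).mp h).1
  obtain ⟨r, hrirr, hrg⟩ := WfDvdMonoid.exists_irreducible_factor hco hg0
  have hrp : r ∣ p := hrg.trans (gcd_dvd_left _ _)
  have hrq : r ∣ q := hrg.trans (gcd_dvd_right _ _)
  haveI hmax : (Ideal.span {r}).IsMaximal :=
    PrincipalIdealRing.isMaximal_of_irreducible hrirr
  letI : Field (ℚ[X] ⧸ Ideal.span {r}) := Ideal.Quotient.field _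
  set φ := Ideal.Quotient.mk (Ideal.span {r}) with hφ
  have hφp : φ p = 0 := Ideal.Quotient.eq_zero_iff_mem.mpr
    (Ideal.mem_span_singleton.mpr hrp)
  have hφq : φ q = 0 := Ideal.Quotient.eq_zero_iff_mem.mpr
    (Ideal.mem_span_singleton.mpr hrq)
  set β := φ (X + C b) with hβ
  have hinj : Function.Injective (φ.comp (C : ℚ →+* ℚ[X])) := (φ.comp C).injective
  have hc0 : φ (C b) ≠ 0 := by
    intro h
    refine hb0 (hinj ?_)
    simp only [RingHom.comp_apply, map_zero]
    exact h
  have hβm : β ^ m = φ (C b) := by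
    have := hφp
    rw [hp, map_sub, map_pow, sub_eq_zero] at this
    exact this
  have hβn : β ^ n = φ (C b) := by
    have := hφq
    rw [hq, map_sub, map_pow, sub_eq_zero] at this
    exact this
  have hβ0 : β ≠ 0 := by
    intro h
    rw [h, zero_pow hm.ne'] at hβm
    exact hc0 hβm.symm
  have hβnm : β ^ (n - m) = 1 := by
    have h1 : β ^ m * β ^ (n - m) = β ^ m * 1 := by
      rw [mul_one, ← pow_add, Nat.add_sub_cancel' hmn.le, hβm, hβn]
    exact mul_left_cancel₀ (pow_ne_zero m hβ0) h1
  have hcnm : (φ (C b)) ^ (n - m) = 1 := by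
    rw [← hβm, ← pow_mul, mul_comm, pow_mul, hβnm, one_pow]
  have hbnm : b ^ (n - m) = 1 := by
    apply hinj
    simp only [RingHom.comp_apply, map_pow, map_one]
    exact hcnm
  have := (pow_eq_one_iff_of_ne_zero (by omega : n - m ≠ 0)).mp hbnm
  rcases this with h | ⟨h, _⟩
  · exact hb1 h
  · exact hbm1 h

theorem monomial_chain_gcd (b : ℚ) (hb0 : b ≠ 0) (hb1 : b ≠ 1) (hbm1 : b ≠ -1)
    (m n : ℕ) (hm : 0 < m) (hmn : m < n) :
    IsCoprime ((X + C b) ^ m - C b) ((X + C b) ^ n - C b) ∧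
    (∀ d : ℕ, d = Nat.gcd m n →
      ((Odd (m / d) ∧ Odd (n / d)) →
        gcd ((X - C 1) ^ m + 1 : ℚ[X]) ((X - C 1) ^ n + 1) = (X - C 1) ^ d + 1) ∧
      (¬ (Odd (m / d) ∧ Odd (n / d)) →
        IsCoprime ((X - C 1) ^ m + 1 : ℚ[X]) ((X - C 1) ^ n + 1))) := by
  refine ⟨part1 b hb0 hb1 hbm1 m n hm hmn, ?_⟩
  intro d hd
  have hn : 0 < n := hm.trans hmn
  have hdm : d ∣ m := hd ▸ Nat.gcd_dvd_left m n
  have hdn : d ∣ n := hd ▸ Nat.gcd_dvd_right m n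

  set y : ℚ[X] := X - C 1 with hy
  have hd0 : 0 < d := hd ▸ Nat.gcd_pos_of_pos_left n hm
  set g : ℚ[X] := gcd (y ^ m + 1) (y ^ n + 1) with hg
  have h2 : C (2⁻¹ : ℚ) * 2 = (1 : ℚ[X]) := by
    rw [← map_ofNat (C : ℚ →+* ℚ[X]) 2, ← C_mul]
    norm_num
  have hfac : ∀ k : ℕ, (y ^ (2 * k) - 1 : ℚ[X]) = (y ^ k - 1) * (y ^ k + 1) := by
    intro k; rw [two_mul, pow_add]; ring
  have hg2m : g ∣ y ^ (2 * m) - 1 := (gcd_dvd_left _ _).trans ⟨y ^ m - 1, by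
    rw [hfac]; ring⟩
  have hg2n : g ∣ y ^ (2 * n) - 1 := (gcd_dvd_right _ _).trans ⟨y ^ n - 1, by
    rw [hfac]; ring⟩
  have hg2d : g ∣ y ^ (2 * d) - 1 := by
    have := dvd_pow_gcd_sub_one y g (2 * m) (2 * n) hg2m hg2n
    rwa [Nat.gcd_mul_left, ← hd] at this
  constructor
  · rintro ⟨hom, hon⟩
    have hdvd : ∀ k : ℕ, d ∣ k → Odd (k / d) → (y ^ d + 1 : ℚ[X]) ∣ y ^ k + 1 := by
      intro k hdk hok
      have := hok.add_dvd_pow_add_pow (y ^ d) (1 : ℚ[X])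
      rwa [one_pow, ← pow_mul, Nat.mul_div_cancel' hdk] at this
    have hleft : (y ^ d + 1 : ℚ[X]) ∣ g := dvd_gcd (hdvd m (hd ▸ Nat.gcd_dvd_left m n) hom)
      (hdvd n (hd ▸ Nat.gcd_dvd_right m n) hon)
    have hq : (y ^ d - 1 : ℚ[X]) ∣ y ^ m - 1 := by
      have := sub_dvd_pow_sub_pow (y ^ d) (1 : ℚ[X]) (m / d)
      rwa [one_pow, ← pow_mul, Nat.mul_div_cancel' hdm] at this
    obtain ⟨q, hq⟩ := hq
    have hcop : IsCoprime (y ^ m + 1 : ℚ[X]) (y ^ d - 1) :=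
      ⟨C (2⁻¹ : ℚ), -(C (2⁻¹ : ℚ) * q), by linear_combination C (2⁻¹:ℚ) * hq + h2⟩
    have hcop' : IsCoprime g (y ^ d - 1 : ℚ[X]) :=
      hcop.of_isCoprime_of_dvd_left (gcd_dvd_left _ _)
    have hright : g ∣ y ^ d + 1 := by
      refine hcop'.dvd_of_dvd_mul_left ?_
      rw [← hfac d]; exact hg2d
    have hmono : (y ^ d + 1 : ℚ[X]).Monic := by
      refine ((monic_X_sub_C (1:ℚ)).pow d).add_of_left ?_
      rw [degree_pow, degree_X_sub_C, degree_one]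
      simpa using hd0
    calc g = normalize g := (normalize_gcd _ _).symm
      _ = normalize (y ^ d + 1) := normalize_eq_normalize hright hleft
      _ = y ^ d + 1 := hmono.normalize_eq_self
  · intro hno
    rw [not_and_or, Nat.not_odd_iff_even, Nat.not_odd_iff_even] at hno
    have key : ∀ k : ℕ, d ∣ k → Even (k / d) → g ∣ y ^ k + 1 → IsCoprime (y ^ m + 1 : ℚ[X]) (y ^ n + 1) := by
      intro k hdk hek hgk
      obtain ⟨t, ht⟩ := hek
      have hkt : k = 2 * d * t := by
        have h := Nat.div_mul_cancel hdk
        rw [ht] at h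
        rw [← h]; ring
      have hgm1 : g ∣ y ^ k - 1 := by
        refine hg2d.trans ?_
        have := sub_dvd_pow_sub_pow (y ^ (2 * d)) (1 : ℚ[X]) t
        rwa [one_pow, ← pow_mul, ← hkt] at this
      have hcop : IsCoprime (y ^ k + 1 : ℚ[X]) (y ^ k - 1) :=
        ⟨C (2⁻¹ : ℚ), -C (2⁻¹ : ℚ), by linear_combination h2⟩
      have : IsUnit g := hcop.isUnit_of_dvd' hgk hgm1
      exact (gcd_isUnit_iff _ _).mp this
    rcases hno with he | he
    · exact key m hdm he (gcd_dvd_left _ _)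
    · exact key n hdn he (gcd_dvd_right _ _)
end

section
/- Over a field of characteristic 2, if a monic polynomial f of degree 3 commutes under composition with two monic polynomials g₁, g₂ of the same degree k ≥ 1 (f∘g_i = g_i∘f), then g₁ = g₂. -/
open Polynomial

theorem commuting_with_cubic_unique (K : Type*) [Field K] [CharP K 2]
    (f g₁ g₂ : K[X]) (hf : f.Monic) (hdeg : f.natDegree = 3)
    (k : ℕ) (hk : 1 ≤ k)
    (hg₁ : g₁.Monic) (hg₁deg : g₁.natDegree = k)
    (hg₂ : g₂.Monic) (hg₂deg : g₂.natDegree = k)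
    (hc₁ : f.comp g₁ = g₁.comp f) (hc₂ : f.comp g₂ = g₂.comp f) :
    g₁ = g₂ := by
  by_contra hne
  set h : K[X] := g₁ - g₂ with hh
  have hne0 : h ≠ 0 := sub_ne_zero.mpr hne
  -- degree of h is less than k
  have hdlt : h.natDegree < k := by
    have hd : (g₁ - g₂).degree < g₁.degree := by
      refine degree_sub_lt ?_ hg₁.ne_zero ?_
      · rw [degree_eq_natDegree hg₁.ne_zero, degree_eq_natDegree hg₂.ne_zero,
          hg₁deg, hg₂deg]
      · rw [hg₁.leadingCoeff, hg₂.leadingCoeff]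
    have := natDegree_lt_natDegree hne0 hd
    rwa [hg₁deg] at this
  -- char 2 facts
  have h2 : (2 : K[X]) = 0 := by
    have : ((2 : ℕ) : K) = 0 := CharP.cast_eq_zero K 2
    have h2K : (2 : K) = 0 := by exact_mod_cast this
    calc (2 : K[X]) = C (2 : K) := (map_ofNat C 2).symm
    _ = 0 := by rw [h2K, C_0]
  -- express f explicitly
  set a := f.coeff 2 with ha
  set b := f.coeff 1 with hb
  set c := f.coeff 0 with hcc
  have hf3 : f.coeff 3 = 1 := by
    have := hf.coeff_natDegree
    rwa [hdeg] at this
  have hfeq : f = X ^ 3 + C a * X ^ 2 + C b * X + C c := by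
    have := Polynomial.as_sum_range' f 4 (by omega)
    rw [this]
    simp [Finset.sum_range_succ, hf3, ← C_mul_X_pow_eq_monomial]
    ring
  set Q : K[X] := g₁ ^ 2 + g₁ * g₂ + g₂ ^ 2 + C a * (g₁ + g₂) + C b with hQdef
  have key : h.comp f = h * Q := by
    calc h.comp f = g₁.comp f - g₂.comp f := by rw [hh, sub_comp]
    _ = f.comp g₁ - f.comp g₂ := by rw [hc₁, hc₂]
    _ = h * Q := by
        rw [hfeq, hh, hQdef]
        simp only [add_comp, mul_comp, pow_comp, X_comp, C_comp]
        ring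
  have hQ2 : Q = g₁ * g₂ + (h ^ 2 + C a * h + C b) := by
    rw [hQdef, hh]
    linear_combination (g₁ * g₂ + C a * g₂) * h2
  have hQdeg : Q.natDegree = 2 * k := by
    rw [hQ2]
    have h1 : (g₁ * g₂).natDegree = 2 * k := by
      rw [natDegree_mul hg₁.ne_zero hg₂.ne_zero, hg₁deg, hg₂deg]; ring
    have h2' : (h ^ 2 + C a * h + C b).natDegree < 2 * k := by
      have b1 : (h ^ 2 + C a * h + C b).natDegree ≤ 2 * h.natDegree := by
        refine le_trans (natDegree_add_le _ _) ?_
        refine max_le (le_trans (natDegree_add_le _ _) ?_) (by simp)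
        refine max_le ?_ ?_
        · simpa using natDegree_pow_le (p := h) (n := 2)
        · refine le_trans (natDegree_mul_le) ?_
          simp [natDegree_C]
          omega
      omega
    rw [natDegree_add_eq_left_of_natDegree_lt (by omega)]; omega
  have hQne : Q ≠ 0 := by
    intro h0
    rw [h0, natDegree_zero] at hQdeg
    omega
  have hL : (h.comp f).natDegree = h.natDegree * 3 := by
    rw [natDegree_comp, hdeg]
  have hR : (h * Q).natDegree = h.natDegree + 2 * k := by
    rw [natDegree_mul hne0 hQne, hQdeg]
  rw [key, hR] at hL
  omega
end

section
/- Let p be a prime and r a positive integer. Then F_{p^r}(x) ≡ x^{p^r} (mod p) and (x+1)^{p^r} − 1 ≡ x^{p^r} (mod p), where F_n(x) = 2T_n(x/2 + 1) − 2. -/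
open Polynomial

theorem dickson_pow_zmod (p : ℕ) [Fact p.Prime] (r : ℕ) :
    dickson 1 (1 : ZMod p) (p ^ r) = X ^ (p ^ r) := by
  induction r with
  | zero => simp [dickson_one]
  | succ n ih =>
    rw [pow_succ, dickson_one_one_mul, dickson_one_one_zmod_p, ih, X_pow_comp, ← pow_mul,
      mul_comm]

theorem frob_add_C (p : ℕ) [Fact p.Prime] (r : ℕ) (c : ZMod p) :
    (X + C c) ^ (p ^ r) = X ^ (p ^ r) + C c := by
  rw [add_pow_char_pow, ← C_pow, ZMod.pow_card_pow]

theorem F_pow_prime_mod (p : ℕ) [Fact p.Prime] (r : ℕ) (hr : 0 < r)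
    (F : ℤ[X])
    (hF : F.map (Int.castRingHom ℚ) =
      C 2 * (Polynomial.Chebyshev.T ℚ ((p ^ r : ℕ) : ℤ)).comp (C (1/2) * X + C 1) - C 2) :
    F.map (Int.castRingHom (ZMod p)) = X ^ (p ^ r) ∧
    ((X + 1) ^ (p ^ r) - 1 : Polynomial (ZMod p)) = X ^ (p ^ r) := by
  have h2 : ((X + 1) ^ (p ^ r) - 1 : Polynomial (ZMod p)) = X ^ (p ^ r) := by
    rw [← C_1, frob_add_C]; ring
  refine ⟨?_, h2⟩
  have key : F = (dickson 1 (1 : ℤ) (p ^ r)).comp (X + C 2) - C 2 := by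
    have hinj : Function.Injective (Polynomial.map (Int.castRingHom ℚ)) :=
      Polynomial.map_injective _ (Int.cast_injective)
    apply hinj
    rw [hF, Polynomial.map_sub, Polynomial.map_comp, map_dickson]
    simp only [map_one, Polynomial.map_add, Polynomial.map_X, map_C, eq_intCast, Int.cast_one,
      Int.cast_ofNat, Polynomial.map_ofNat]
    rw [dickson_one_one_eq_chebyshev_T, mul_comp, ofNat_comp, comp_assoc]
    have h4 : ((C (⅟ 2 : ℚ) * X).comp (X + (2 : ℚ[X]))) = C (1/2 : ℚ) * X + C 1 := by
      simp [mul_add]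
      rw [show ((2:ℚ[X])) = C 2 from (map_ofNat C 2).symm, ← C_mul]
      norm_num
    rw [h4]
    simp only [C_1, map_ofNat]
    ring
  rw [key, Polynomial.map_sub, Polynomial.map_comp, map_dickson]
  simp only [map_one, Polynomial.map_add, Polynomial.map_X, map_C]
  rw [dickson_pow_zmod, X_pow_comp, frob_add_C]
  ring
end
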